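/- Let f(w) = (1/2)⟨w, Aw⟩ − ⟨b, w⟩ + c be a quadratic function on ℝⁿ with A symmetric positive definite. Let x ∈ ℝⁿ with g := ∇f(x) ≠ 0, let t := 2‖g‖²/⟨g, Ag⟩, y := x − t·g, and h := ∇f(y). Assume g and h are linearly independent, and let p := x + α·g + β·h be the ellipcenter iterate, where Δ := ⟨h, Ah⟩⟨g, Ag⟩ − ⟨g, Ah⟩², α := (⟨h, g⟩⟨g, Ah⟩ − ⟨g, g⟩⟨h, Ah⟩)/Δ, β := (−⟨h, g⟩⟨g, Ag⟩ + ⟨g, g⟩⟨h, Ag⟩)/Δ. Let x_grad := x − (t/2)·g be the iterate of the gradient method with optimal step. Then f(p) ≤ f(x_grad). -/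

import Mathlib

open Matrix

/-!
Write `q(u) = u ⬝ᵥ A *ᵥ u`. The ellipcenter coefficients `α, β` are Cramer's rule for the
normal equations `⟨∇f(p), g⟩ = ⟨∇f(p), h⟩ = 0`, i.e. `p` is the critical point of `f` on the
plane `x + span {g, h}`, and `Δ`, the Gram determinant of `g, h` for the inner product `q`, is
nonzero by linear independence. Since `f (p + s) = f p + ⟨∇f(p), s⟩ + q(s)/2`, the point `p`
minimises `f` on that plane, which contains `x − (t/2)·g`.
-/

noncomputable def quadratic {ι : Type*} [Fintype ι] (A : Matrix ι ι ℝ) (b : ι → ℝ) (c : ℝ)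
    (w : ι → ℝ) : ℝ :=
  (1/2) * (w ⬝ᵥ A *ᵥ w) - b ⬝ᵥ w + c

section

variable {ι : Type*} [Fintype ι] {A : Matrix ι ι ℝ}

theorem Matrix.IsSymm.dotProduct_mulVec_comm (hA : A.IsSymm) (u v : ι → ℝ) :
    u ⬝ᵥ A *ᵥ v = v ⬝ᵥ A *ᵥ u := by
  rw [dotProduct_mulVec, ← mulVec_transpose, hA.eq, dotProduct_comm]

theorem quadratic_add (hA : A.IsSymm) (b : ι → ℝ) (c : ℝ) (w s : ι → ℝ) :
    quadratic A b c (w + s) =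
      quadratic A b c w + (A *ᵥ w - b) ⬝ᵥ s + (1/2) * (s ⬝ᵥ A *ᵥ s) := by
  simp only [quadratic, mulVec_add, dotProduct_add, add_dotProduct, sub_dotProduct]
  rw [dotProduct_comm (A *ᵥ w) s, dotProduct_comm b s, hA.dotProduct_mulVec_comm w s]
  ring

theorem quadratic_le_add_of_dotProduct_eq_zero (hA : A.PosSemidef) {b : ι → ℝ} (c : ℝ)
    {w s : ι → ℝ} (hs : (A *ᵥ w - b) ⬝ᵥ s = 0) :
    quadratic A b c w ≤ quadratic A b c (w + s) := by
  have hq : 0 ≤ s ⬝ᵥ A *ᵥ s := by simpa using hA.dotProduct_mulVec_nonneg s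
  rw [quadratic_add (isHermitian_iff_isSymm.mp hA.isHermitian), hs]
  linarith

theorem Matrix.PosDef.gram_det_pos (hA : A.PosDef) {u v : ι → ℝ}
    (huv : LinearIndependent ℝ ![u, v]) :
    0 < (v ⬝ᵥ A *ᵥ v) * (u ⬝ᵥ A *ᵥ u) - (u ⬝ᵥ A *ᵥ v) ^ 2 := by
  have hq : ∀ w : ι → ℝ, w ≠ 0 → 0 < w ⬝ᵥ A *ᵥ w := fun w hw => by
    simpa using hA.dotProduct_mulVec_pos hw
  set G := u ⬝ᵥ A *ᵥ u
  set M := u ⬝ᵥ A *ᵥ v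
  have hG : 0 < G := hq u (huv.ne_zero 0)
  -- `G⁻¹ • ((-M) • u + G • v)` is the `A`-orthogonal projection of `v` off `u`.
  have hw : (-M) • u + G • v ≠ 0 := fun h0 =>
    hG.ne' (LinearIndependent.pair_iff.mp huv _ _ h0).2
  have hwq : ((-M) • u + G • v) ⬝ᵥ A *ᵥ ((-M) • u + G • v) =
      G * ((v ⬝ᵥ A *ᵥ v) * G - M ^ 2) := by
    simp only [mulVec_add, mulVec_smul, dotProduct_add, add_dotProduct, dotProduct_smul,
      smul_dotProduct, smul_eq_mul]
    rw [(isHermitian_iff_isSymm.mp hA.isHermitian).dotProduct_mulVec_comm v u]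
    ring
  exact pos_of_mul_pos_right (hwq ▸ hq _ hw) hG.le

end

theorem solve_symm_two_by_two {K : Type*} [Field K] {G M H γ η α β Δ : K}
    (hΔ : Δ = H * G - M ^ 2) (hΔ0 : Δ ≠ 0)
    (hα : α = (η * M - γ * H) / Δ) (hβ : β = (-η * G + γ * M) / Δ) :
    γ + α * G + β * M = 0 ∧ η + α * M + β * H = 0 := by
  subst hα hβ
  constructor <;> field_simp <;> rw [hΔ] <;> ring

theorem ellipcenter_gradient_orthogonal {ι : Type*} [Fintype ι] {A : Matrix ι ι ℝ}
    (hA : A.IsSymm) {b x g h : ι → ℝ} {Δ α β : ℝ} (hg : g = A *ᵥ x - b)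
    (hΔ : Δ = (h ⬝ᵥ A *ᵥ h) * (g ⬝ᵥ A *ᵥ g) - (g ⬝ᵥ A *ᵥ h) ^ 2) (hΔ0 : Δ ≠ 0)
    (hα : α = ((h ⬝ᵥ g) * (g ⬝ᵥ A *ᵥ h) - (g ⬝ᵥ g) * (h ⬝ᵥ A *ᵥ h)) / Δ)
    (hβ : β = (-(h ⬝ᵥ g) * (g ⬝ᵥ A *ᵥ g) + (g ⬝ᵥ g) * (h ⬝ᵥ A *ᵥ g)) / Δ) :
    (A *ᵥ (x + α • g + β • h) - b) ⬝ᵥ g = 0 ∧ (A *ᵥ (x + α • g + β • h) - b) ⬝ᵥ h = 0 := by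
  have hgrad : A *ᵥ (x + α • g + β • h) - b = g + α • A *ᵥ g + β • A *ᵥ h := by
    rw [mulVec_add, mulVec_add, mulVec_smul, mulVec_smul, show A *ᵥ x = g + b by rw [hg]; abel]
    abel
  rw [hA.dotProduct_mulVec_comm h g] at hβ
  obtain ⟨hg_eq, hh_eq⟩ := solve_symm_two_by_two hΔ hΔ0 hα hβ
  simp only [hgrad, add_dotProduct, smul_dotProduct, smul_eq_mul]
  rw [dotProduct_comm (A *ᵥ g) g, dotProduct_comm (A *ᵥ h) g, dotProduct_comm (A *ᵥ g) h,
    dotProduct_comm (A *ᵥ h) h, dotProduct_comm g h, hA.dotProduct_mulVec_comm h g]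
  exact ⟨hg_eq, hh_eq⟩

theorem stmt11_general {n : ℕ} (A : Matrix (Fin n) (Fin n) ℝ) (hA : A.PosDef)
    (b : Fin n → ℝ) (c : ℝ) (f : (Fin n → ℝ) → ℝ)
    (hf : ∀ w, f w = (1/2) * (w ⬝ᵥ A.mulVec w) - b ⬝ᵥ w + c)
    (x g : Fin n → ℝ) (hg : g = A.mulVec x - b)
    (t : ℝ)
    (h : Fin n → ℝ)
    (hindep : LinearIndependent ℝ ![g, h])
    (Δ α β : ℝ)
    (hΔ : Δ = (h ⬝ᵥ A.mulVec h) * (g ⬝ᵥ A.mulVec g) - (g ⬝ᵥ A.mulVec h) ^ 2)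
    (hα : α = ((h ⬝ᵥ g) * (g ⬝ᵥ A.mulVec h) - (g ⬝ᵥ g) * (h ⬝ᵥ A.mulVec h)) / Δ)
    (hβ : β = (-(h ⬝ᵥ g) * (g ⬝ᵥ A.mulVec g) + (g ⬝ᵥ g) * (h ⬝ᵥ A.mulVec g)) / Δ)
    (p : Fin n → ℝ) (hp : p = x + α • g + β • h)
    (xgrad : Fin n → ℝ) (hxgrad : xgrad = x - (t / 2) • g) :
    f p ≤ f xgrad := by
  have hf_eq : f = quadratic A b c := funext hf
  have hΔ0 : Δ ≠ 0 := hΔ ▸ (hA.gram_det_pos hindep).ne'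
  have hsymm : A.IsSymm := isHermitian_iff_isSymm.mp hA.isHermitian
  obtain ⟨hpg, hph⟩ := ellipcenter_gradient_orthogonal hsymm hg hΔ hΔ0 hα hβ
  rw [← hp] at hpg hph
  have hxgrad_eq : xgrad = p + ((-(t / 2) - α) • g + (-β) • h) := by
    rw [hxgrad, hp]
    module
  rw [hf_eq, hxgrad_eq]
  apply quadratic_le_add_of_dotProduct_eq_zero hA.posSemidef
  rw [dotProduct_add, dotProduct_smul, dotProduct_smul, hpg, hph, smul_zero, smul_zero, add_zero]

/-- The ellipcenter iterate `p` is at least as good as the iterate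
`x_grad = x − (t/2)·g` of the gradient method with optimal step: `f(p) ≤ f(x_grad)`. -/
theorem stmt11 {n : ℕ} (A : Matrix (Fin n) (Fin n) ℝ) (hA : A.PosDef)
    (b : Fin n → ℝ) (c : ℝ) (f : (Fin n → ℝ) → ℝ)
    (hf : ∀ w, f w = (1/2) * (w ⬝ᵥ A.mulVec w) - b ⬝ᵥ w + c)
    (x g : Fin n → ℝ) (hg : g = A.mulVec x - b) (hg0 : g ≠ 0)
    (t : ℝ) (ht : t = 2 * (g ⬝ᵥ g) / (g ⬝ᵥ A.mulVec g))
    (y : Fin n → ℝ) (hy : y = x - t • g)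
    (h : Fin n → ℝ) (hh : h = A.mulVec y - b)
    (hindep : LinearIndependent ℝ ![g, h])
    (Δ α β : ℝ)
    (hΔ : Δ = (h ⬝ᵥ A.mulVec h) * (g ⬝ᵥ A.mulVec g) - (g ⬝ᵥ A.mulVec h) ^ 2)
    (hα : α = ((h ⬝ᵥ g) * (g ⬝ᵥ A.mulVec h) - (g ⬝ᵥ g) * (h ⬝ᵥ A.mulVec h)) / Δ)
    (hβ : β = (-(h ⬝ᵥ g) * (g ⬝ᵥ A.mulVec g) + (g ⬝ᵥ g) * (h ⬝ᵥ A.mulVec g)) / Δ)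
    (p : Fin n → ℝ) (hp : p = x + α • g + β • h)
    (xgrad : Fin n → ℝ) (hxgrad : xgrad = x - (t / 2) • g) :
    f p ≤ f xgrad :=
  stmt11_general A hA b c f hf x g hg t h hindep Δ α β hΔ hα hβ p hp xgrad hxgrad
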